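/- arXiv:2308.15108 — 7 statements merged into one kernel-verified Lean document; each statement's English description precedes it below -/
import Mathlib

section
/- Let P > 0 be a capacity and D : Fin m → ℝ nonnegative demands, and let y : Fin R → Fin m → ℝ be a feasible spray matrix. Then there exists a feasible spray matrix ȳ : Fin R → Fin m → ℝ such that ȳ r j > 0 implies y r j > 0 for all r and j (so the support of ȳ is contained in the support of y), and the number of multi-supported rows of ȳ is at most m − 1, i.e. strictly fewer than m rows have support of size at least two. (This is the matrix core of the paper's Theorem 1: since the support only shrinks, any routing compatible with y is compatible with ȳ at the same cost, so an optimal solution exists in which fewer than m robots spray multiple edges.) -/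
/-!
Among the feasible matrices whose support lies inside that of `y`, take one, `z`, with the
fewest nonzero entries. Then no nonzero matrix `δ` with zero row and column sums is supported
in the support `S` of `z`: otherwise `z + t δ`, for the largest `t` keeping it nonnegative, is
feasible with a strictly smaller support. So the linear map sending a matrix supported in `S`
to its row sums over the set `A` of nonzero rows and its column sums is injective; as the row
sums and the column sums have the same total, its image has dimension at most `|A| + m - 1`,
whence `|S| ≤ |A| + m - 1`. Counting `S` row by row, each multi-supported row contributes at
least one entry more than it does to `|A|`, so there are at most `m - 1` such rows.
-/

open Finset

variable {ι κ 𝕜 : Type*}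

lemma card_filter_pos_add_card_filter_two_le_sum (s : Finset ι) (d : ι → ℕ) :
    #(s.filter (0 < d ·)) + #(s.filter (2 ≤ d ·)) ≤ ∑ r ∈ s, d r := by
  rw [card_filter, card_filter, ← sum_add_distrib]
  gcongr with r
  split_ifs <;> omega

variable [Fintype ι] [Fintype κ]

def IsBalanced [AddCommMonoid 𝕜] (δ : ι → κ → 𝕜) : Prop :=
  (∀ r, ∑ j, δ r j = 0) ∧ ∀ j, ∑ r, δ r j = 0

lemma IsBalanced.neg [AddCommGroup 𝕜] {δ : ι → κ → 𝕜} (hδ : IsBalanced δ) :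
    IsBalanced (-δ) :=
  ⟨fun r => by simp [hδ.1 r], fun j => by simp [hδ.2 j]⟩

lemma sum_col_eq_zero_of_forall_ne [AddCommMonoid 𝕜] {δ : ι → κ → 𝕜}
    (hrow : ∀ r, ∑ j, δ r j = 0) {j₀ : κ} (hcol : ∀ j ≠ j₀, ∑ r, δ r j = 0) (j : κ) :
    ∑ r, δ r j = 0 := by
  classical
  obtain rfl | hj := eq_or_ne j j₀
  · have htotal : ∑ j', ∑ r, δ r j' = 0 := by
      rw [sum_comm]
      simp [hrow]
    rwa [← add_sum_erase _ _ (mem_univ j),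
      sum_eq_zero fun j' hj' => hcol j' (ne_of_mem_erase hj'), add_zero] at htotal
  · exact hcol j hj

theorem card_add_one_le_of_isBalanced_eq_zero [Field 𝕜] [Nonempty κ]
    (S : Finset (ι × κ)) (A : Finset ι) (hSA : ∀ p ∈ S, p.1 ∈ A)
    (hS : ∀ δ : ι → κ → 𝕜, (∀ r j, δ r j ≠ 0 → (r, j) ∈ S) → IsBalanced δ → δ = 0) :
    #S + 1 ≤ #A + Fintype.card κ := by
  classical
  obtain ⟨j₀⟩ := ‹Nonempty κ›
  let E : (S → 𝕜) →ₗ[𝕜] ι × κ → 𝕜 := Function.ExtendByZero.linearMap 𝕜 Subtype.val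
  -- The sum of column `j₀` is determined by the other column sums and the row sums.
  let L : (ι × κ → 𝕜) →ₗ[𝕜] (A → 𝕜) × ({j // j ≠ j₀} → 𝕜) :=
    (LinearMap.pi fun r => ∑ j, LinearMap.proj (r.1, j)).prod
      (LinearMap.pi fun j => ∑ r, LinearMap.proj (r, j.1))
  have hinj : Function.Injective (L ∘ₗ E) := by
    rw [← LinearMap.ker_eq_bot, LinearMap.ker_eq_bot']
    intro g hg
    set δ : ι → κ → 𝕜 := fun r j => E g (r, j)
    have hsupp : ∀ r j, δ r j ≠ 0 → (r, j) ∈ S := by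
      intro r j hne
      by_contra hrj
      exact hne (Function.extend_apply' _ _ _ fun p => by grind)
    have hrow : ∀ r, ∑ j, δ r j = 0 := by
      intro r
      by_cases hr : r ∈ A
      · simpa [L, δ] using congrFun (congrArg Prod.fst hg) ⟨r, hr⟩
      · exact sum_eq_zero fun j _ => by_contra fun hne => hr (hSA _ (hsupp r j hne))
    have hcol : ∀ j ≠ j₀, ∑ r, δ r j = 0 := fun j hj => by
      simpa [L, δ] using congrFun (congrArg Prod.snd hg) ⟨j, hj⟩
    have hδ := hS δ hsupp ⟨hrow, sum_col_eq_zero_of_forall_ne hrow hcol⟩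
    funext p
    simpa [δ, E] using congrFun (congrFun hδ p.1.1) p.1.2
  have hrank := LinearMap.finrank_le_finrank_of_injective hinj
  simp only [Module.finrank_fintype_fun_eq_card, Fintype.card_coe, ne_eq, Module.finrank_prod,
    Fintype.card_subtype_compl, Fintype.card_unique] at hrank
  have := Fintype.card_pos (α := κ)
  omega

section Ordered

variable [Field 𝕜] [LinearOrder 𝕜]

lemma exists_add_mul_nonneg_eq_zero [IsStrictOrderedRing 𝕜] {α : Type*} [Fintype α]
    {z δ : α → 𝕜}
    (hz : ∀ a, 0 ≤ z a) (hneg : ∃ a, δ a < 0) :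
    ∃ t : 𝕜, (∀ a, 0 ≤ z a + t * δ a) ∧ ∃ a, δ a < 0 ∧ z a + t * δ a = 0 := by
  classical
  have hT : (univ.filter fun a => δ a < 0).Nonempty := by simpa [filter_nonempty_iff] using hneg
  obtain ⟨a₀, ha₀, hmin⟩ := exists_min_image _ (fun a => z a / -δ a) hT
  simp only [mem_filter, mem_univ, true_and] at ha₀ hmin
  refine ⟨z a₀ / -δ a₀, fun a => ?_, a₀, ha₀, ?_⟩
  · rcases lt_or_ge (δ a) 0 with ha | ha
    · have := (le_div_iff₀ (neg_pos.2 ha)).1 (hmin a ha)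
      linarith
    · exact add_nonneg (hz a) (mul_nonneg (div_nonneg (hz a₀) (neg_nonneg.2 ha₀.le)) ha)
  · rw [div_neg, neg_mul, div_mul_cancel₀ _ ha₀.ne, add_neg_cancel]

structure IsFeasibleSpray (P : 𝕜) (D : κ → 𝕜) (y : ι → κ → 𝕜) : Prop where
  nonneg : ∀ r j, 0 ≤ y r j
  sum_row_le : ∀ r, ∑ j, y r j ≤ P
  sum_col_eq : ∀ j, ∑ r, y r j = D j

def posSupport (y : ι → κ → 𝕜) : Finset (ι × κ) :=
  univ.filter fun p => 0 < y p.1 p.2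

@[simp]
lemma mem_posSupport {y : ι → κ → 𝕜} {p : ι × κ} : p ∈ posSupport y ↔ 0 < y p.1 p.2 := by
  simp [posSupport]

lemma posSupport_subset_posSupport_iff {y z : ι → κ → 𝕜} :
    posSupport z ⊆ posSupport y ↔ ∀ r j, 0 < z r j → 0 < y r j := by
  simp [subset_iff]

lemma card_posSupport (y : ι → κ → 𝕜) :
    #(posSupport y) = ∑ r, #(univ.filter fun j => 0 < y r j) := by
  simp only [posSupport, card_filter, Fintype.sum_prod_type]

variable {P : 𝕜} {D : κ → 𝕜} {z δ : ι → κ → 𝕜}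

lemma IsFeasibleSpray.add_mul (hz : IsFeasibleSpray P D z) (hδ : IsBalanced δ) (t : 𝕜)
    (hnonneg : ∀ r j, 0 ≤ z r j + t * δ r j) :
    IsFeasibleSpray P D fun r j => z r j + t * δ r j where
  nonneg := hnonneg
  sum_row_le r := by simpa [sum_add_distrib, ← mul_sum, hδ.1 r] using hz.sum_row_le r
  sum_col_eq j := by simpa [sum_add_distrib, ← mul_sum, hδ.2 j] using hz.sum_col_eq j

lemma IsFeasibleSpray.exists_posSupport_ssubset [IsStrictOrderedRing 𝕜]
    (hz : IsFeasibleSpray P D z) (hδ : IsBalanced δ)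
    (hsupp : ∀ r j, δ r j ≠ 0 → (r, j) ∈ posSupport z) (hδ0 : δ ≠ 0) :
    ∃ w, IsFeasibleSpray P D w ∧ posSupport w ⊂ posSupport z := by
  wlog hneg : ∃ r j, δ r j < 0 generalizing δ
  · obtain ⟨r, j, hne⟩ : ∃ r j, δ r j ≠ 0 := by
      by_contra! h
      exact hδ0 (funext fun r => funext (h r))
    push Not at hneg
    exact this hδ.neg (by simpa using hsupp) (neg_ne_zero.2 hδ0)
      ⟨r, j, by simpa using (hneg r j).lt_of_ne hne.symm⟩
  obtain ⟨t, hnonneg, ⟨r₀, j₀⟩, hneg₀, hzero⟩ :=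
    exists_add_mul_nonneg_eq_zero (z := fun p : ι × κ => z p.1 p.2) (δ := fun p => δ p.1 p.2)
      (fun p => hz.nonneg _ _) (by simpa using hneg)
  refine ⟨_, hz.add_mul hδ t fun r j => hnonneg (r, j), ?_⟩
  rw [ssubset_iff_of_subset]
  · exact ⟨(r₀, j₀), hsupp _ _ hneg₀.ne, by simp [hzero]⟩
  · rintro ⟨r, j⟩ h
    by_cases hδrj : δ r j = 0
    · simpa [hδrj] using h
    · exact hsupp r j hδrj

theorem IsFeasibleSpray.exists_posSupport_subset_isBalanced_eq_zero [IsStrictOrderedRing 𝕜]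
    {y : ι → κ → 𝕜} (hy : IsFeasibleSpray P D y) :
    ∃ z, IsFeasibleSpray P D z ∧ posSupport z ⊆ posSupport y ∧
      ∀ δ : ι → κ → 𝕜, (∀ r j, δ r j ≠ 0 → (r, j) ∈ posSupport z) → IsBalanced δ → δ = 0 := by
  induction hn : #(posSupport y) using Nat.strong_induction_on generalizing y with
  | _ n ih =>
  by_cases hfree : ∀ δ : ι → κ → 𝕜,
      (∀ r j, δ r j ≠ 0 → (r, j) ∈ posSupport y) → IsBalanced δ → δ = 0
  · exact ⟨y, hy, subset_rfl, hfree⟩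
  push Not at hfree
  obtain ⟨δ, hsupp, hδ, hδ0⟩ := hfree
  obtain ⟨w, hw, hwy⟩ := hy.exists_posSupport_ssubset hδ hsupp hδ0
  obtain ⟨z, hz, hzw, hzfree⟩ := ih _ (hn ▸ card_lt_card hwy) hw rfl
  exact ⟨z, hz, hzw.trans hwy.subset, hzfree⟩

end Ordered

theorem spray_matrix_few_multi_supported_rows_general
    (R m : ℕ) (hm : 1 ≤ m) (P : ℝ)
    (D : Fin m → ℝ)
    (y : Fin R → Fin m → ℝ)
    (hy_nonneg : ∀ r j, 0 ≤ y r j)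
    (hy_cap : ∀ r, ∑ j, y r j ≤ P)
    (hy_dem : ∀ j, ∑ r, y r j = D j) :
    ∃ ybar : Fin R → Fin m → ℝ,
      (∀ r j, 0 ≤ ybar r j) ∧
      (∀ r, ∑ j, ybar r j ≤ P) ∧
      (∀ j, ∑ r, ybar r j = D j) ∧
      (∀ r j, 0 < ybar r j → 0 < y r j) ∧
      {r : Fin R | 2 ≤ {j : Fin m | 0 < ybar r j}.ncard}.ncard < m := by
  obtain ⟨z, ⟨hz_nonneg, hz_cap, hz_dem⟩, hzy, hz_free⟩ :=
    IsFeasibleSpray.exists_posSupport_subset_isBalanced_eq_zero ⟨hy_nonneg, hy_cap, hy_dem⟩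
  refine ⟨z, hz_nonneg, hz_cap, hz_dem, posSupport_subset_posSupport_iff.1 hzy, ?_⟩
  have : Nonempty (Fin m) := ⟨⟨0, hm⟩⟩
  set deg : Fin R → ℕ := fun r => #(univ.filter fun j => 0 < z r j)
  have hdim := card_add_one_le_of_isBalanced_eq_zero (posSupport z) (univ.filter (0 < deg ·))
    (fun p hp => by simpa [deg] using card_pos.2 ⟨p.2, by simpa using hp⟩) hz_free
  have hcount := card_filter_pos_add_card_filter_two_le_sum univ deg
  rw [← card_posSupport] at hcount
  rw [Fintype.card_fin] at hdim
  have hmulti : #(univ.filter (2 ≤ deg ·)) < m := by omega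
  simpa [Set.ncard_eq_toFinset_card', deg] using hmulti

/-- The matrix core of Theorem 1 of the paper: given a feasible spray matrix `y`
(nonnegative, row sums at most the capacity `P`, column sums equal to the demands `D`),
there is a feasible spray matrix `ȳ` whose support is contained in the support of `y`
and for which strictly fewer than `m` rows are multi-supported (have support of size
at least two). -/
theorem spray_matrix_few_multi_supported_rows
    (R m : ℕ) (hm : 1 ≤ m) (P : ℝ) (hP : 0 < P)
    (D : Fin m → ℝ) (hD : ∀ j, 0 ≤ D j)
    (y : Fin R → Fin m → ℝ)
    (hy_nonneg : ∀ r j, 0 ≤ y r j)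
    (hy_cap : ∀ r, ∑ j, y r j ≤ P)
    (hy_dem : ∀ j, ∑ r, y r j = D j) :
    ∃ ybar : Fin R → Fin m → ℝ,
      (∀ r j, 0 ≤ ybar r j) ∧
      (∀ r, ∑ j, ybar r j ≤ P) ∧
      (∀ j, ∑ r, ybar r j = D j) ∧
      (∀ r j, 0 < ybar r j → 0 < y r j) ∧
      {r : Fin R | 2 ≤ {j : Fin m | 0 < ybar r j}.ncard}.ncard < m :=
  spray_matrix_few_multi_supported_rows_general R m hm P D y hy_nonneg hy_cap hy_dem
end

section
/- Let y : Fin R → Fin m → ℝ be a spray matrix with m ≥ 1. If at least m rows of y are multi-supported, then there exists a spray matrix ȳ : Fin R → Fin m → ℝ with the same row sums (∑_j ȳ r j = ∑_j y r j for every r) and the same column sums (∑_r ȳ r j = ∑_r y r j for every j), whose support {(r,j) : ȳ r j > 0} is a strict subset of the support {(r,j) : y r j > 0} of y. -/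
/-- If a spray matrix `y` (a nonnegative `Fin R × Fin m` real matrix) has at least `m`
multi-supported rows (rows whose support has at least two elements), then there is a
spray matrix `ȳ` with the same row sums and the same column sums whose support is a
strict subset of the support of `y`. -/
theorem spray_matrix_strictly_smaller_support
    (R m : ℕ) (hm : 1 ≤ m)
    (y : Fin R → Fin m → ℝ)
    (hy_nonneg : ∀ r j, 0 ≤ y r j)
    (hmulti : m ≤ {r : Fin R | 2 ≤ {j : Fin m | 0 < y r j}.ncard}.ncard) :
    ∃ ybar : Fin R → Fin m → ℝ,
      (∀ r j, 0 ≤ ybar r j) ∧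
      (∀ r, ∑ j, ybar r j = ∑ j, y r j) ∧
      (∀ j, ∑ r, ybar r j = ∑ r, y r j) ∧
      {p : Fin R × Fin m | 0 < ybar p.1 p.2} ⊂ {p : Fin R × Fin m | 0 < y p.1 p.2} := by
  classical
  set S : Set (Fin R) := {r : Fin R | 2 ≤ {j : Fin m | 0 < y r j}.ncard} with hS
  have hSfin : S.Finite := Set.toFinite S
  have hcard : m ≤ hSfin.toFinset.card := by
    rwa [← Set.ncard_eq_toFinset_card S hSfin]
  obtain ⟨T, hTsub, hTcard⟩ := Finset.exists_subset_card_eq hcard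
  have hTcard' : Fintype.card {x // x ∈ T} = m := by rw [Fintype.card_coe]; exact hTcard
  let e : {x // x ∈ T} ≃ Fin m := Fintype.equivFinOfCardEq hTcard'
  set f : Fin m → Fin R := fun i => (e.symm i : Fin R) with hf
  have hfinj : Function.Injective f := by
    intro a b hab
    exact e.symm.injective (Subtype.ext hab)
  have hfS : ∀ i, f i ∈ S := by
    intro i
    exact hSfin.mem_toFinset.mp (hTsub (e.symm i).2)
  -- pick two distinct support columns in each chosen row
  have h2 : ∀ i : Fin m, ∃ a b : Fin m, 0 < y (f i) a ∧ 0 < y (f i) b ∧ a ≠ b := by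
    intro i
    have hmem := hfS i
    rw [hS, Set.mem_setOf_eq] at hmem
    have h1 : 1 < {j : Fin m | 0 < y (f i) j}.ncard := lt_of_lt_of_le one_lt_two hmem
    rw [Set.one_lt_ncard_iff (Set.toFinite _)] at h1
    obtain ⟨a, b, ha, hb, hab⟩ := h1
    exact ⟨a, b, ha, hb, hab⟩
  choose j1 j2 hj1 hj2 hj12 using h2
  -- the column-sum linear map of the elementary difference matrices
  let L : (Fin m → ℝ) →ₗ[ℝ] (Fin m → ℝ) :=
  { toFun := fun c j => ∑ i, c i * ((if j = j1 i then (1:ℝ) else 0) - (if j = j2 i then 1 else 0))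
    map_add' := by
      intro a b; funext j; simp [add_mul, Finset.sum_add_distrib]
    map_smul' := by
      intro s a; funext j; simp [Finset.mul_sum, mul_assoc] }
  have hLdef : ∀ c j, L c j = ∑ i, c i * ((if j = j1 i then (1:ℝ) else 0) - (if j = j2 i then 1 else 0)) :=
    fun c j => rfl
  have hLsum : ∀ c, ∑ j, L c j = 0 := by
    intro c
    simp only [hLdef]
    rw [Finset.sum_comm]
    apply Finset.sum_eq_zero
    intro i _
    rw [← Finset.mul_sum]
    have h0 : ∑ j, ((if j = j1 i then (1:ℝ) else 0) - (if j = j2 i then 1 else 0)) = 0 := by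
      rw [Finset.sum_sub_distrib]; simp
    rw [h0, mul_zero]
  have hLnotinj : ¬ Function.Injective L := by
    intro hinj
    have hsurj := LinearMap.injective_iff_surjective.mp hinj
    obtain ⟨c, hc⟩ := hsurj (fun _ => (1:ℝ))
    have h0 := hLsum c
    rw [hc] at h0
    simp at h0
    omega
  rw [Function.not_injective_iff] at hLnotinj
  obtain ⟨a, b, hab, habne⟩ := hLnotinj
  set c : Fin m → ℝ := a - b with hcdef
  have hc0 : c ≠ 0 := sub_ne_zero.mpr habne
  have hLc : L c = 0 := by rw [hcdef, map_sub, hab, sub_self]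
  obtain ⟨i0, hi0'⟩ := Function.ne_iff.mp hc0
  have hi0 : c i0 ≠ 0 := by simpa using hi0'
  -- the perturbation matrix z
  set z : Fin R → Fin m → ℝ := fun r j =>
    ∑ i, c i * ((if r = f i ∧ j = j1 i then (1:ℝ) else 0) - (if r = f i ∧ j = j2 i then 1 else 0))
    with hzdef
  have hzval : ∀ r j, z r j =
      ∑ i, c i * ((if r = f i ∧ j = j1 i then (1:ℝ) else 0) - (if r = f i ∧ j = j2 i then 1 else 0)) :=
    fun r j => rfl
  have hzf : ∀ i j, z (f i) j = c i * ((if j = j1 i then (1:ℝ) else 0) - (if j = j2 i then 1 else 0)) := by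
    intro i j
    rw [hzval]
    rw [Finset.sum_eq_single i]
    · simp
    · intro i' _ hne'
      have h : ¬ (f i = f i') := fun h => hne' (hfinj h).symm
      simp [h]
    · intro h; exact absurd (Finset.mem_univ i) h
  have hzrow : ∀ r, ∑ j, z r j = 0 := by
    intro r
    simp only [hzval]
    rw [Finset.sum_comm]
    apply Finset.sum_eq_zero
    intro i _
    rw [← Finset.mul_sum, Finset.sum_sub_distrib]
    by_cases h : r = f i <;> simp [h]
  have hzcol : ∀ j, ∑ r, z r j = 0 := by
    intro j
    have hLj : L c j = 0 := by rw [hLc]; rfl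
    rw [← hLj, hLdef]
    simp only [hzval]
    rw [Finset.sum_comm]
    apply Finset.sum_congr rfl
    intro i _
    rw [← Finset.mul_sum, Finset.sum_sub_distrib]
    by_cases h1 : j = j1 i
    · simp [h1, hj12 i]
    · by_cases h2 : j = j2 i
      · simp [h2, Ne.symm (hj12 i)]
      · simp [h1, h2]
  have hzsupp : ∀ r j, z r j ≠ 0 → 0 < y r j := by
    intro r j hzne
    by_contra hy
    have hy0 : y r j = 0 := le_antisymm (not_lt.mp hy) (hy_nonneg r j)
    apply hzne
    rw [hzval]
    apply Finset.sum_eq_zero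
    intro i _
    have h1 : ¬ (r = f i ∧ j = j1 i) := by
      rintro ⟨hr, hj⟩; rw [hr, hj] at hy0; exact absurd hy0 (ne_of_gt (hj1 i))
    have h2 : ¬ (r = f i ∧ j = j2 i) := by
      rintro ⟨hr, hj⟩; rw [hr, hj] at hy0; exact absurd hy0 (ne_of_gt (hj2 i))
    simp [h1, h2]
  -- z has a negative entry
  have hv1 : z (f i0) (j1 i0) = c i0 := by
    rw [hzf]; simp [hj12 i0]
  have hv2 : z (f i0) (j2 i0) = -c i0 := by
    rw [hzf]
    have h : j2 i0 ≠ j1 i0 := Ne.symm (hj12 i0)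
    simp [h]
  have hneg : ∃ p : Fin R × Fin m, z p.1 p.2 < 0 := by
    rcases hi0.lt_or_gt with h | h
    · exact ⟨(f i0, j1 i0), by rw [hv1]; exact h⟩
    · exact ⟨(f i0, j2 i0), by rw [hv2]; linarith⟩
  set N : Finset (Fin R × Fin m) := Finset.univ.filter (fun p => z p.1 p.2 < 0) with hN
  have hNne : N.Nonempty := by
    obtain ⟨p, hp⟩ := hneg
    exact ⟨p, by simp [hN, hp]⟩
  set g : (Fin R × Fin m) → ℝ := fun p => y p.1 p.2 / (-(z p.1 p.2)) with hg
  set t : ℝ := N.inf' hNne g with ht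
  have hgpos : ∀ p ∈ N, 0 < g p := by
    intro p hp
    have hzp : z p.1 p.2 < 0 := by
      rw [hN] at hp; exact (Finset.mem_filter.mp hp).2
    exact div_pos (hzsupp _ _ (ne_of_lt hzp)) (neg_pos.mpr hzp)
  have htpos : 0 < t := by
    rw [ht]
    exact (Finset.lt_inf'_iff hNne).mpr hgpos
  set ybar : Fin R → Fin m → ℝ := fun r j => y r j + t * z r j with hybar
  refine ⟨ybar, ?_, ?_, ?_, ?_⟩
  · -- nonnegativity
    intro r j
    by_cases hzj : z r j < 0
    · have hmem : (r, j) ∈ N := by simp [hN, hzj]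
      have hle : t ≤ g (r, j) := Finset.inf'_le g hmem
      have hz' : 0 < -(z r j) := neg_pos.mpr hzj
      rw [hg] at hle
      have hmul : t * (-(z r j)) ≤ y r j := (le_div_iff₀ hz').mp hle
      show 0 ≤ y r j + t * z r j
      nlinarith
    · push_neg at hzj
      have h1 : 0 ≤ t * z r j := mul_nonneg htpos.le hzj
      have h2 := hy_nonneg r j
      show 0 ≤ y r j + t * z r j
      linarith
  · -- row sums
    intro r
    show ∑ j, (y r j + t * z r j) = ∑ j, y r j
    rw [Finset.sum_add_distrib, ← Finset.mul_sum, hzrow, mul_zero, add_zero]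
  · -- column sums
    intro j
    show ∑ r, (y r j + t * z r j) = ∑ r, y r j
    rw [Finset.sum_add_distrib, ← Finset.mul_sum, hzcol, mul_zero, add_zero]
  · -- strict support shrinkage
    have hsub : {p : Fin R × Fin m | 0 < ybar p.1 p.2} ⊆ {p : Fin R × Fin m | 0 < y p.1 p.2} := by
      intro p hp
      simp only [Set.mem_setOf_eq] at hp ⊢
      by_contra hy
      have hy0 : y p.1 p.2 = 0 := le_antisymm (not_lt.mp hy) (hy_nonneg _ _)
      have hz0 : z p.1 p.2 = 0 := by
        by_contra h
        have := hzsupp _ _ h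
        rw [hy0] at this
        exact lt_irrefl 0 this
      have hb0 : ybar p.1 p.2 = 0 := by
        show y p.1 p.2 + t * z p.1 p.2 = 0
        rw [hy0, hz0]; ring
      rw [hb0] at hp
      exact lt_irrefl 0 hp
    obtain ⟨p0, hp0N, hp0⟩ := Finset.exists_mem_eq_inf' hNne g
    have hz0neg : z p0.1 p0.2 < 0 := by
      rw [hN] at hp0N; exact (Finset.mem_filter.mp hp0N).2
    have hzne : z p0.1 p0.2 ≠ 0 := ne_of_lt hz0neg
    have hy0pos : 0 < y p0.1 p0.2 := hzsupp _ _ hzne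
    have hbar0 : ybar p0.1 p0.2 = 0 := by
      show y p0.1 p0.2 + t * z p0.1 p0.2 = 0
      rw [ht, hp0, hg]
      rw [div_mul_eq_mul_div, mul_div_assoc, div_neg, div_self hzne, mul_neg_one]
      ring
    rw [Set.ssubset_iff_of_subset hsub]
    refine ⟨p0, hy0pos, ?_⟩
    simp only [Set.mem_setOf_eq, hbar0]
    exact lt_irrefl 0
end

section
/- For every spray matrix y : Fin R → Fin m → ℝ there exists a spray matrix ȳ : Fin R → Fin m → ℝ with the same row sums (∑_j ȳ r j = ∑_j y r j for every r) and the same column sums (∑_r ȳ r j = ∑_r y r j for every j), whose support is contained in the support of y, and whose bipartite support graph is acyclic (contains no cycle). -/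
/-- The bipartite support graph of a spray matrix `y : Fin R → Fin m → ℝ`: the simple
graph on `Fin R ⊕ Fin m` joining a row `r` to a column `j` exactly when `y r j > 0`. -/
def supportGraph {R m : ℕ} (y : Fin R → Fin m → ℝ) : SimpleGraph (Fin R ⊕ Fin m) :=
  SimpleGraph.fromRel fun a b => ∃ r j, a = Sum.inl r ∧ b = Sum.inr j ∧ 0 < y r j

namespace SprayAux

variable {R m : ℕ}

lemma adj_cases {y : Fin R → Fin m → ℝ} {a b : Fin R ⊕ Fin m}
    (h : (supportGraph y).Adj a b) :
    ∃ r j, 0 < y r j ∧ ((a = Sum.inl r ∧ b = Sum.inr j) ∨ (b = Sum.inl r ∧ a = Sum.inr j)) := by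
  rw [supportGraph, SimpleGraph.fromRel_adj] at h
  rcases h.2 with ⟨r, j, h1, h2, h3⟩ | ⟨r, j, h1, h2, h3⟩
  · exact ⟨r, j, h3, Or.inl ⟨h1, h2⟩⟩
  · exact ⟨r, j, h3, Or.inr ⟨h1, h2⟩⟩

noncomputable def F (y : Fin R → Fin m → ℝ) :
    {u w : Fin R ⊕ Fin m} → (supportGraph y).Walk u w → ℝ → (Fin R → Fin m → ℝ)
  | _, _, .nil, _ => 0
  | u, _, .cons (v := a) _ q, s =>
      (fun r j => if u = Sum.inl r ∧ a = Sum.inr j ∨ a = Sum.inl r ∧ u = Sum.inr j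
        then s else 0) + F y q (-s)

lemma F_support {y : Fin R → Fin m → ℝ} {u w : Fin R ⊕ Fin m}
    (p : (supportGraph y).Walk u w) :
    ∀ (s : ℝ) (r : Fin R) (j : Fin m), F y p s r j ≠ 0 → 0 < y r j := by
  induction p with
  | nil => intro s r j h; simp [F] at h
  | @cons u a w h q ih =>
    intro s r j hne
    by_cases hc : u = Sum.inl r ∧ a = Sum.inr j ∨ a = Sum.inl r ∧ u = Sum.inr j
    · obtain ⟨r', j', hy', hor⟩ := adj_cases h
      rcases hc with ⟨hu, ha⟩ | ⟨ha, hu⟩ <;> rcases hor with ⟨hu', ha'⟩ | ⟨ha', hu'⟩ <;>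
        simp_all
    · apply ih (-s) r j
      simpa [F, hc] using hne

lemma F_mem_edges {y : Fin R → Fin m → ℝ} {u w : Fin R ⊕ Fin m}
    (p : (supportGraph y).Walk u w) :
    ∀ (s : ℝ) (r : Fin R) (j : Fin m), F y p s r j ≠ 0 →
      s(Sum.inl r, Sum.inr j) ∈ p.edges := by
  induction p with
  | nil => intro s r j h; simp [F] at h
  | @cons u a w h q ih =>
    intro s r j hne
    rw [SimpleGraph.Walk.edges_cons]
    rw [List.mem_cons]
    by_cases hc : u = Sum.inl r ∧ a = Sum.inr j ∨ a = Sum.inl r ∧ u = Sum.inr j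
    · left
      rcases hc with ⟨hu, ha⟩ | ⟨ha, hu⟩
      · rw [hu, ha]
      · rw [hu, ha, Sym2.eq_swap]
    · right
      exact ih (-s) r j (by simpa [F, hc] using hne)

lemma F_row_sum {y : Fin R → Fin m → ℝ} {u w : Fin R ⊕ Fin m}
    (p : (supportGraph y).Walk u w) :
    ∀ (s : ℝ) (r : Fin R),
      ∑ j, F y p s r j =
        (if u = Sum.inl r then s else 0) -
          (if w = Sum.inl r then s * (-1) ^ p.length else 0) := by
  induction p with
  | nil => intro s r; simp [F]
  | @cons u a w h q ih =>
    intro s r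
    have hsum : ∑ j, F y (SimpleGraph.Walk.cons h q) s r j
        = (∑ j, (if u = Sum.inl r ∧ a = Sum.inr j ∨ a = Sum.inl r ∧ u = Sum.inr j
            then s else (0:ℝ))) + ∑ j, F y q (-s) r j := by
      rw [← Finset.sum_add_distrib]; rfl
    have hind : (∑ j, (if u = Sum.inl r ∧ a = Sum.inr j ∨ a = Sum.inl r ∧ u = Sum.inr j
        then s else (0:ℝ)))
        = (if u = Sum.inl r then s else 0) + (if a = Sum.inl r then s else 0) := by
      obtain ⟨r', j', hy', hor⟩ := adj_cases h
      rcases hor with ⟨hu', ha'⟩ | ⟨ha', hu'⟩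
      · subst hu'; subst ha'
        by_cases hr : r' = r
        · subst hr
          simp [Finset.sum_ite_eq']
        · simp [hr, Sum.inl.injEq]
      · subst hu'; subst ha'
        by_cases hr : r' = r
        · subst hr
          simp
        · simp [hr, Sum.inl.injEq]
    rw [hsum, hind, ih (-s) r]
    simp only [SimpleGraph.Walk.length_cons, pow_succ]
    split <;> split <;> split <;> ring

lemma F_col_sum {y : Fin R → Fin m → ℝ} {u w : Fin R ⊕ Fin m}
    (p : (supportGraph y).Walk u w) :
    ∀ (s : ℝ) (j : Fin m),
      ∑ r, F y p s r j =
        (if u = Sum.inr j then s else 0) -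
          (if w = Sum.inr j then s * (-1) ^ p.length else 0) := by
  induction p with
  | nil => intro s j; simp [F]
  | @cons u a w h q ih =>
    intro s j
    have hsum : ∑ r, F y (SimpleGraph.Walk.cons h q) s r j
        = (∑ r, (if u = Sum.inl r ∧ a = Sum.inr j ∨ a = Sum.inl r ∧ u = Sum.inr j
            then s else (0:ℝ))) + ∑ r, F y q (-s) r j := by
      rw [← Finset.sum_add_distrib]; rfl
    have hind : (∑ r, (if u = Sum.inl r ∧ a = Sum.inr j ∨ a = Sum.inl r ∧ u = Sum.inr j
        then s else (0:ℝ)))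
        = (if u = Sum.inr j then s else 0) + (if a = Sum.inr j then s else 0) := by
      obtain ⟨r', j', hy', hor⟩ := adj_cases h
      rcases hor with ⟨hu', ha'⟩ | ⟨ha', hu'⟩
      · subst hu'; subst ha'
        by_cases hj : j' = j
        · subst hj
          simp
        · simp [hj, Sum.inr.injEq]
      · subst hu'; subst ha'
        by_cases hj : j' = j
        · subst hj
          simp
        · simp [hj, Sum.inr.injEq]
    rw [hsum, hind, ih (-s) j]
    simp only [SimpleGraph.Walk.length_cons, pow_succ]
    split <;> split <;> split <;> ring

def side : Fin R ⊕ Fin m → ℝ := Sum.elim (fun _ => 1) (fun _ => -1)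

lemma side_sq (v : Fin R ⊕ Fin m) : side v * side v = 1 := by
  cases v <;> simp [side]

lemma neg_one_pow_length {y : Fin R → Fin m → ℝ} {u w : Fin R ⊕ Fin m}
    (p : (supportGraph y).Walk u w) :
    (-1 : ℝ) ^ p.length = side u * side w := by
  induction p with
  | nil => rw [SimpleGraph.Walk.length_nil, pow_zero, side_sq]
  | @cons u a w h q ih =>
    have hside : side u = -side a := by
      obtain ⟨r', j', hy', hor⟩ := adj_cases h
      rcases hor with ⟨hu', ha'⟩ | ⟨ha', hu'⟩ <;> subst hu' <;> subst ha' <;> simp [side]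
    rw [SimpleGraph.Walk.length_cons, pow_succ, ih, hside]
    ring

lemma exists_reduce {y : Fin R → Fin m → ℝ} (hy : ∀ r j, 0 ≤ y r j)
    (hcyc : ¬ (supportGraph y).IsAcyclic) :
    ∃ y' : Fin R → Fin m → ℝ, (∀ r j, 0 ≤ y' r j) ∧
      (∀ r, ∑ j, y' r j = ∑ j, y r j) ∧ (∀ j, ∑ r, y' r j = ∑ r, y r j) ∧
      (∀ r j, 0 < y' r j → 0 < y r j) ∧
      (Finset.univ.filter fun p : Fin R × Fin m => 0 < y' p.1 p.2).card <
        (Finset.univ.filter fun p : Fin R × Fin m => 0 < y p.1 p.2).card := by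
  rw [SimpleGraph.IsAcyclic] at hcyc
  push_neg at hcyc
  obtain ⟨v, c, hc⟩ := hcyc
  cases c with
  | nil => exact absurd rfl hc.ne_nil
  | @cons _ a _ h q =>
    set f : Fin R → Fin m → ℝ := F y (SimpleGraph.Walk.cons h q) 1 with hf
    -- closed walk: (-1)^length = 1
    have hlen : ((-1 : ℝ)) ^ (SimpleGraph.Walk.cons h q).length = 1 := by
      rw [neg_one_pow_length, side_sq]
    -- row and column sums of f vanish
    have hrow : ∀ r, ∑ j, f r j = 0 := by
      intro r
      rw [hf, F_row_sum, hlen, mul_one, sub_self]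
    have hcol : ∀ j, ∑ r, f r j = 0 := by
      intro j
      rw [hf, F_col_sum, hlen, mul_one, sub_self]
    -- the first edge has f-value 1
    obtain ⟨r0, j0, hy0, hor⟩ := adj_cases h
    have hfirst : f r0 j0 = 1 := by
      have hq0 : F y q (-1) r0 j0 = 0 := by
        by_contra hne
        have hmem := F_mem_edges q (-1) r0 j0 hne
        have hnd := hc.edges_nodup
        rw [SimpleGraph.Walk.edges_cons] at hnd
        have heq : s(v, a) = s(Sum.inl r0, Sum.inr j0) := by
          rcases hor with ⟨hu', ha'⟩ | ⟨ha', hu'⟩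
          · rw [hu', ha']
          · rw [hu', ha', Sym2.eq_swap]
        exact (List.nodup_cons.mp hnd).1 (heq ▸ hmem)
      have hcond : (v = Sum.inl r0 ∧ a = Sum.inr j0 ∨ a = Sum.inl r0 ∧ v = Sum.inr j0) := hor
      show ((fun r j => if v = Sum.inl r ∧ a = Sum.inr j ∨ a = Sum.inl r ∧ v = Sum.inr j
        then (1:ℝ) else 0) + F y q (-1)) r0 j0 = 1
      simp [hcond, hq0]
    -- some entry of f in row r0 is negative
    have hneg : ∃ j1, f r0 j1 < 0 := by
      by_contra hno
      push_neg at hno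
      have : (1 : ℝ) ≤ ∑ j, f r0 j := by
        rw [← hfirst]
        exact Finset.single_le_sum (fun j _ => hno j) (Finset.mem_univ j0)
      rw [hrow r0] at this
      linarith
    obtain ⟨j1, hj1⟩ := hneg
    -- the set of negative entries
    set S : Finset (Fin R × Fin m) :=
      Finset.univ.filter (fun p => f p.1 p.2 < 0) with hS
    have hne : S.Nonempty := ⟨(r0, j1), by simp [hS, hj1]⟩
    set t : ℝ := S.inf' hne (fun p => y p.1 p.2 / (-f p.1 p.2)) with ht
    have hSpos : ∀ p ∈ S, 0 < y p.1 p.2 / (-f p.1 p.2) := by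
      intro p hp
      rw [hS, Finset.mem_filter] at hp
      have hfp : f p.1 p.2 < 0 := hp.2
      have hyp : 0 < y p.1 p.2 := F_support _ 1 p.1 p.2 (by rw [← hf]; exact ne_of_lt hfp)
      exact div_pos hyp (by linarith)
    have htpos : 0 < t := by
      rw [ht, Finset.lt_inf'_iff]
      exact hSpos
    have htle : ∀ r j, f r j < 0 → t * (-f r j) ≤ y r j := by
      intro r j hfrj
      have hmem : (r, j) ∈ S := by simp [hS, hfrj]
      have := Finset.inf'_le (fun p => y p.1 p.2 / (-f p.1 p.2)) hmem
      rw [← ht] at this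
      calc t * (-f r j) ≤ (y r j / (-f r j)) * (-f r j) := by
            apply mul_le_mul_of_nonneg_right this; linarith
        _ = y r j := div_mul_cancel₀ _ (by linarith)
    refine ⟨fun r j => y r j + t * f r j, ?_, ?_, ?_, ?_, ?_⟩
    · intro r j
      show 0 ≤ y r j + t * f r j
      by_cases hfrj : f r j < 0
      · have := htle r j hfrj
        nlinarith
      · push_neg at hfrj
        nlinarith [hy r j, mul_nonneg htpos.le hfrj]
    · intro r
      rw [Finset.sum_add_distrib, ← Finset.mul_sum, hrow r, mul_zero, add_zero]
    · intro j
      rw [Finset.sum_add_distrib, ← Finset.mul_sum, hcol j, mul_zero, add_zero]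
    · intro r j hpos
      have hpos' : 0 < y r j + t * f r j := hpos
      by_cases hfrj : f r j = 0
      · rw [hfrj, mul_zero, add_zero] at hpos'; exact hpos'
      · exact F_support _ 1 r j (by rw [← hf]; exact hfrj)
    · -- strict card decrease
      obtain ⟨pm, hpm, hpme⟩ := Finset.exists_mem_eq_inf' hne (fun p => y p.1 p.2 / (-f p.1 p.2))
      have hfm : f pm.1 pm.2 < 0 := by
        rw [hS, Finset.mem_filter] at hpm; exact hpm.2
      have hym : 0 < y pm.1 pm.2 :=
        F_support _ 1 pm.1 pm.2 (by rw [← hf]; exact ne_of_lt hfm)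
      have hfne : f pm.1 pm.2 ≠ 0 := ne_of_lt hfm
      have hzero : y pm.1 pm.2 + t * f pm.1 pm.2 = 0 := by
        rw [← ht] at hpme
        have hkey : y pm.1 pm.2 / -f pm.1 pm.2 * f pm.1 pm.2 = -y pm.1 pm.2 := by
          rw [div_neg, neg_mul, div_mul_cancel₀ _ hfne]
        rw [hpme, hkey]
        ring
      apply Finset.card_lt_card
      constructor
      · intro p hp
        rw [Finset.mem_filter] at hp ⊢
        refine ⟨Finset.mem_univ _, ?_⟩
        have hp2 : 0 < y p.1 p.2 + t * f p.1 p.2 := hp.2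
        by_cases hfp : f p.1 p.2 = 0
        · rw [hfp, mul_zero, add_zero] at hp2; exact hp2
        · exact F_support _ 1 p.1 p.2 (by rw [← hf]; exact hfp)
      · intro hsub
        have hmem : pm ∈ Finset.univ.filter fun p : Fin R × Fin m => 0 < y p.1 p.2 := by
          simp [hym]
        have := hsub hmem
        rw [Finset.mem_filter] at this
        have h2 : 0 < y pm.1 pm.2 + t * f pm.1 pm.2 := this.2
        rw [hzero] at h2
        exact lt_irrefl 0 h2

end SprayAux

/-- For every spray matrix `y` there is a spray matrix `ȳ` with the same row sums and
the same column sums, whose support is contained in the support of `y`, and whose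
bipartite support graph is acyclic. -/
theorem spray_matrix_acyclic_support
    (R m : ℕ) (hm : 1 ≤ m)
    (y : Fin R → Fin m → ℝ)
    (hy_nonneg : ∀ r j, 0 ≤ y r j) :
    ∃ ybar : Fin R → Fin m → ℝ,
      (∀ r j, 0 ≤ ybar r j) ∧
      (∀ r, ∑ j, ybar r j = ∑ j, y r j) ∧
      (∀ j, ∑ r, ybar r j = ∑ r, y r j) ∧
      (∀ r j, 0 < ybar r j → 0 < y r j) ∧
      (supportGraph ybar).IsAcyclic := by
  suffices H : ∀ (n : ℕ) (y : Fin R → Fin m → ℝ), (∀ r j, 0 ≤ y r j) →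
      (Finset.univ.filter fun p : Fin R × Fin m => 0 < y p.1 p.2).card ≤ n →
      ∃ ybar : Fin R → Fin m → ℝ,
        (∀ r j, 0 ≤ ybar r j) ∧
        (∀ r, ∑ j, ybar r j = ∑ j, y r j) ∧
        (∀ j, ∑ r, ybar r j = ∑ r, y r j) ∧
        (∀ r j, 0 < ybar r j → 0 < y r j) ∧
        (supportGraph ybar).IsAcyclic by
    exact H _ y hy_nonneg le_rfl
  intro n
  induction n with
  | zero =>
    intro y hy hcard
    refine ⟨y, hy, fun _ => rfl, fun _ => rfl, fun _ _ h => h, ?_⟩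
    intro v c hc
    cases c with
    | nil => exact hc.ne_nil rfl
    | cons h q =>
      obtain ⟨r, j, hyrj, -⟩ := SprayAux.adj_cases h
      have hmem : (r, j) ∈ Finset.univ.filter fun p : Fin R × Fin m => 0 < y p.1 p.2 := by
        simp [hyrj]
      have : (Finset.univ.filter fun p : Fin R × Fin m => 0 < y p.1 p.2) = ∅ :=
        Finset.card_eq_zero.mp (Nat.le_zero.mp hcard)
      rw [this] at hmem
      exact absurd hmem (Finset.notMem_empty _)
  | succ n ih =>
    intro y hy hcard
    by_cases hac : (supportGraph y).IsAcyclic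
    · exact ⟨y, hy, fun _ => rfl, fun _ => rfl, fun _ _ h => h, hac⟩
    · obtain ⟨y', h1, h2, h3, h4, h5⟩ := SprayAux.exists_reduce hy hac
      obtain ⟨ybar, b1, b2, b3, b4, b5⟩ := ih y' h1 (by omega)
      exact ⟨ybar, b1, fun r => (b2 r).trans (h2 r), fun j => (b3 j).trans (h3 j),
        fun r j hb => h4 r j (b4 r j hb), b5⟩
end

section
/- Let y : Fin R → Fin m → ℝ be a spray matrix with m ≥ 1. If the bipartite support graph of y is acyclic (contains no cycle), then the number of multi-supported rows of y is at most m − 1. -/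
/-!
Restrict the support graph to the multi-supported rows `M` and all `m` columns. It is still a
forest, so it has at most `#M + m - 1` edges, while every row of `M` contributes at least two
edges. Hence `2 * #M ≤ #M + m - 1`.
-/

open Finset

theorem SimpleGraph.IsAcyclic.card_edgeFinset_le_card_sub_one {V : Type*} [Fintype V]
    {G : SimpleGraph V} [DecidableRel G.Adj] (hG : G.IsAcyclic) :
    #G.edgeFinset ≤ Fintype.card V - 1 := by
  cases isEmpty_or_nonempty V
  · simp [Subsingleton.elim G ⊥]
  classical
  obtain ⟨T, hGT, -, hT⟩ := connected_top.exists_isTree_le_of_le_of_isAcyclic le_top hG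
  have hT_card := hT.card_edgeFinset
  have hGT_card := card_le_card (edgeFinset_mono hGT)
  omega

section SupportGraph

variable {R m : ℕ} {y : Fin R → Fin m → ℝ}

@[simp]
theorem supportGraph_adj_inl_inr {r : Fin R} {j : Fin m} :
    (supportGraph y).Adj (.inl r) (.inr j) ↔ 0 < y r j := by
  simp [supportGraph]

theorem sum_card_support_le_of_isAcyclic (hy : (supportGraph y).IsAcyclic)
    (M : Finset (Fin R)) : ∑ r ∈ M, #{j | 0 < y r j} ≤ #M + m - 1 := by
  classical
  let e : M ⊕ Fin m ↪ Fin R ⊕ Fin m :=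
    (Function.Embedding.subtype (· ∈ M)).sumMap (Function.Embedding.refl _)
  let H := (supportGraph y).comap e
  let edge : (Σ _ : M, Fin m) → Sym2 (M ⊕ Fin m) := fun p => s(.inl p.1, .inr p.2)
  have hedge : Set.InjOn edge (M.attach.sigma fun r => {j | 0 < y r j} : Finset _) := by
    rintro ⟨r, j⟩ - ⟨r', j'⟩ - h
    simpa [edge] using h
  calc ∑ r ∈ M, #{j | 0 < y r j}
      = #(M.attach.sigma fun r => {j | 0 < y r j}) := by
        rw [card_sigma, sum_attach M fun r => #{j | 0 < y r j}]
    _ ≤ #H.edgeFinset := by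
        refine card_le_card_of_injOn edge (fun p hp => ?_) hedge
        simp only [coe_sigma, Set.mem_sigma_iff, coe_filter, Set.mem_ofPred_eq] at hp
        rw [mem_coe, SimpleGraph.mem_edgeFinset, SimpleGraph.mem_edgeSet]
        exact supportGraph_adj_inl_inr.mpr hp.2.2
    _ ≤ Fintype.card (M ⊕ Fin m) - 1 := (hy.of_comap e).card_edgeFinset_le_card_sub_one
    _ = #M + m - 1 := by simp

end SupportGraph

theorem acyclic_support_few_multi_supported_rows_general
    (R m : ℕ)
    (y : Fin R → Fin m → ℝ)
    (hacyclic : (supportGraph y).IsAcyclic) :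
    {r : Fin R | 2 ≤ {j : Fin m | 0 < y r j}.ncard}.ncard ≤ m - 1 := by
  classical
  let M : Finset (Fin R) := {r | 2 ≤ #{j | 0 < y r j}}
  have hM : {r : Fin R | 2 ≤ {j : Fin m | 0 < y r j}.ncard}.ncard = #M := by
    simp [M, Set.ncard_eq_toFinset_card']
  have hsum : 2 * #M ≤ ∑ r ∈ M, #{j | 0 < y r j} := by
    simpa [mul_comm] using card_nsmul_le_sum M _ 2 fun r hr => (mem_filter.mp hr).2
  have hforest := sum_card_support_le_of_isAcyclic hacyclic M
  omega

/-- If the bipartite support graph of a spray matrix `y` is acyclic, then at most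
`m - 1` rows of `y` are multi-supported (have support of size at least two). -/
theorem acyclic_support_few_multi_supported_rows
    (R m : ℕ) (hm : 1 ≤ m)
    (y : Fin R → Fin m → ℝ)
    (hy_nonneg : ∀ r j, 0 ≤ y r j)
    (hacyclic : (supportGraph y).IsAcyclic) :
    {r : Fin R | 2 ≤ {j : Fin m | 0 < y r j}.ncard}.ncard ≤ m - 1 :=
  acyclic_support_few_multi_supported_rows_general R m y hacyclic
end

section
/- Every feasible solution of the counterexample instance has cost at least 7. (Together with the exhibited cost-7 solution, this shows the optimal value of the counterexample instance equals 7.) -/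
/-- The counterexample graph of the paper's Theorem 2: the 4-cycle `0-1-2-3-0` together
with the chord `{0,2}` (vertices `0,1,2,3` stand for the paper's vertices `1,2,3,4`;
the depot is vertex `0`; the missing edge `{1,3}` is the paper's `{2,4}`). -/
def CG : SimpleGraph (Fin 4) where
  Adj a b := a ≠ b ∧ s(a, b) ≠ s(1, 3)
  symm := by
    constructor
    intro a b h
    exact ⟨h.1.symm, by rw [Sym2.eq_swap]; exact h.2⟩
  loopless := by
    constructor
    intro a h
    exact h.1 rfl

instance : DecidableRel CG.Adj := fun a b =>
  decidable_of_iff (a ≠ b ∧ s(a, b) ≠ s(1, 3)) Iff.rfl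

/-- Demands: `12` on the edge `{1,2}` (the paper's `{2,3}`) and `1` on every other edge. -/
noncomputable def Dem : Sym2 (Fin 4) → ℝ := fun e => if e = s(1, 2) then 12 else 1

/-- A feasible solution: a finite family of closed walks at the depot `0` together with
nonnegative sprays `y r e`, where `y r e > 0` only if robot `r`'s walk traverses `e`,
each robot sprays at most the capacity `8` in total, and the total spray on each edge
equals its demand. -/
def Feasible {R : ℕ} (walk : Fin R → CG.Walk 0 0)
    (y : Fin R → Sym2 (Fin 4) → ℝ) : Prop :=
  (∀ r e, 0 ≤ y r e) ∧
  (∀ r e, 0 < y r e → e ∈ (walk r).edges) ∧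
  (∀ r, ∑ e ∈ CG.edgeFinset, y r e ≤ 8) ∧
  (∀ e ∈ CG.edgeSet, ∑ r, y r e = Dem e)


/-! Demand 12 on `{1, 2}` exceeds the capacity 8, so at least two robots traverse `{1, 2}`,
and at least one traverses `{2, 3}`. A nonempty closed walk has at least as many edges as it
visits vertices, so a walk from `0` through `{1, 2}` or `{2, 3}` has length at least 3, and at
least 4 if it uses both. With `S`, `T` the robots traversing these edges, the cost is at least
`3 #(S ∪ T) + #(S ∩ T) = 2 #(S ∪ T) + #S + #T ≥ 4 + 2 + 1`. -/

open Finset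

namespace SimpleGraph.Walk

variable {V : Type*} [DecidableEq V] {G : SimpleGraph V} {u : V}

lemma card_support_toFinset_le_length (w : G.Walk u u) (hw : ¬w.Nil) :
    #w.support.toFinset ≤ w.length := by
  rw [← w.cons_tail_support, List.toFinset_cons,
    insert_eq_of_mem (List.mem_toFinset.2 (end_mem_tail_support hw))]
  calc #w.support.tail.toFinset ≤ w.support.tail.length := List.toFinset_card_le _
    _ = w.length := by simp [length_support]

omit [DecidableEq V] in
lemma not_nil_of_mem_edges {v : V} {w : G.Walk u v} {e : Sym2 V} (he : e ∈ w.edges) :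
    ¬w.Nil := by
  cases w with
  | nil => simp at he
  | cons => simp

lemma card_le_length_of_forall_mem_support (w : G.Walk u u) (hw : ¬w.Nil) {s : Finset V}
    (hs : ∀ v ∈ s, v ∈ w.support) : #s ≤ w.length :=
  (card_le_card fun v hv => List.mem_toFinset.2 (hs v hv)).trans
    (w.card_support_toFinset_le_length hw)

lemma card_le_length_of_mem_edges (w : G.Walk u u) {a b : V} (he : s(a, b) ∈ w.edges) :
    #{u, a, b} ≤ w.length :=
  w.card_le_length_of_forall_mem_support (not_nil_of_mem_edges he) <| by
    simp [w.fst_mem_support_of_mem_edges he, w.snd_mem_support_of_mem_edges he]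

lemma card_le_length_of_mem_edges₂ (w : G.Walk u u) {a b c : V} (he : s(a, b) ∈ w.edges)
    (he' : s(b, c) ∈ w.edges) : #{u, a, b, c} ≤ w.length :=
  w.card_le_length_of_forall_mem_support (not_nil_of_mem_edges he) <| by
    simp [w.fst_mem_support_of_mem_edges he, w.snd_mem_support_of_mem_edges he,
      w.snd_mem_support_of_mem_edges he']

end SimpleGraph.Walk

lemma Finset.sum_le_card_filter_pos_nsmul {ι M : Type*} [AddCommMonoid M] [LinearOrder M]
    [IsOrderedAddMonoid M] (s : Finset ι) {f : ι → M} {c : M}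
    (hf : ∀ i ∈ s, 0 ≤ f i) (hc : ∀ i ∈ s, f i ≤ c) :
    ∑ i ∈ s, f i ≤ #{i ∈ s | 0 < f i} • c := by
  rw [← sum_filter_of_ne fun i hi hi0 => (hf i hi).lt_of_ne' hi0]
  exact sum_le_card_nsmul _ _ _ fun i hi => hc i (mem_filter.1 hi).1

open SimpleGraph

lemma CG.three_mul_ite_or_add_ite_and_le_length (w : CG.Walk 0 0) :
    3 * (if s(1, 2) ∈ w.edges ∨ s(2, 3) ∈ w.edges then 1 else 0) +
      (if s(1, 2) ∈ w.edges ∧ s(2, 3) ∈ w.edges then 1 else 0) ≤ w.length := by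
  by_cases h12 : s(1, 2) ∈ w.edges <;> by_cases h23 : s(2, 3) ∈ w.edges <;>
    simp only [h12, h23, or_self, and_self, or_true, true_or, and_true, and_false, if_true,
      if_false]
  · simpa using w.card_le_length_of_mem_edges₂ h12 h23
  · simpa using w.card_le_length_of_mem_edges h12
  · simpa using w.card_le_length_of_mem_edges h23
  · simp

lemma Feasible.dem_le_card_traversing {R : ℕ} {walk : Fin R → CG.Walk 0 0}
    {y : Fin R → Sym2 (Fin 4) → ℝ} (h : Feasible walk y) {e : Sym2 (Fin 4)}
    (he : e ∈ CG.edgeSet) : Dem e ≤ #{r | e ∈ (walk r).edges} * 8 := by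
  obtain ⟨hy0, hmem, hcap, hdem⟩ := h
  have hcap_e : ∀ r, y r e ≤ 8 := fun r =>
    (single_le_sum (fun e _ => hy0 r e) (mem_edgeFinset.2 he)).trans (hcap r)
  calc Dem e = ∑ r, y r e := (hdem e he).symm
    _ ≤ #{r | 0 < y r e} • 8 :=
      sum_le_card_filter_pos_nsmul _ (fun r _ => hy0 r e) fun r _ => hcap_e r
    _ ≤ #{r | e ∈ (walk r).edges} * 8 := by
      rw [nsmul_eq_mul]
      gcongr with r _
      exact hmem r e

/-- Every feasible solution of the counterexample instance has cost at least `7`. -/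
theorem counterexample_cost_lower_bound_seven
    (R : ℕ) (walk : Fin R → CG.Walk 0 0) (y : Fin R → Sym2 (Fin 4) → ℝ)
    (hfeas : Feasible walk y) :
    7 ≤ ∑ r, (walk r).length := by
  set S : Finset (Fin R) := {r | s(1, 2) ∈ (walk r).edges}
  set T : Finset (Fin R) := {r | s(2, 3) ∈ (walk r).edges}
  have hS : 1 < #S := by
    have := hfeas.dem_le_card_traversing (e := s(1, 2)) (CG.mem_edgeSet.2 (by decide))
    rw [Dem, if_pos rfl] at this
    exact_mod_cast (by linarith : (1 : ℝ) < #S)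
  have hT : 0 < #T := by
    have := hfeas.dem_le_card_traversing (e := s(2, 3)) (CG.mem_edgeSet.2 (by decide))
    rw [Dem, if_neg (by decide)] at this
    exact_mod_cast (by linarith : (0 : ℝ) < #T)
  calc 7 ≤ 3 * #(S ∪ T) + #(S ∩ T) := by
        have := card_union_add_card_inter S T
        have := card_le_card (subset_union_left (s₁ := S) (s₂ := T))
        omega
    _ = ∑ r, (3 * (if s(1, 2) ∈ (walk r).edges ∨ s(2, 3) ∈ (walk r).edges then 1 else 0) +
          (if s(1, 2) ∈ (walk r).edges ∧ s(2, 3) ∈ (walk r).edges then 1 else 0)) := by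
        simp only [S, T, sum_add_distrib, ← mul_sum, sum_boole, Nat.cast_id, filter_or,
          filter_and]
    _ ≤ ∑ r, (walk r).length :=
        sum_le_sum fun r _ => CG.three_mul_ite_or_add_ite_and_le_length (walk r)
end

section
/- The counterexample instance admits a feasible solution of cost 9 in which robot 1 sprays the full capacity on edge {2,3}: robot 1 follows the closed walk 1–2–3–1 (length 3) and sprays 8 on {2,3}; robot 2 follows the closed walk 1–2–3–4–1–3–1 (length 6) and sprays 1 on {1,2}, 4 on {2,3}, 1 on {3,4}, 1 on {1,4}, and 1 on {1,3}. Hence the minimum cost among feasible solutions with some robot spraying exactly 8 on edge {2,3} is attained and equals 9. -/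
/-- Robot 1's walk `1–2–3–1` of the paper (here `0-1-2-0`). -/
def walk₁ : CG.Walk 0 0 :=
  .cons (u := 0) (v := 1) (by decide)
    (.cons (v := 2) (by decide) (.cons (by decide) .nil))

/-- Robot 2's walk `1–2–3–4–1–3–1` of the paper (here `0-1-2-3-0-2-0`). -/
def walk₂ : CG.Walk 0 0 :=
  .cons (u := 0) (v := 1) (by decide)
    (.cons (v := 2) (by decide) (.cons (v := 3) (by decide) (.cons (v := 0) (by decide)
      (.cons (v := 2) (by decide) (.cons (by decide) .nil)))))

/-- Robot 1's sprays: the full capacity `8` on the paper's edge `{2,3}` (here `{1,2}`). -/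
noncomputable def spray₁ : Sym2 (Fin 4) → ℝ := fun e => if e = s(1, 2) then 8 else 0

/-- Robot 2's sprays: `1` on `{1,2}`, `4` on `{2,3}`, `1` on `{3,4}`, `1` on `{1,4}`
and `1` on `{1,3}` of the paper (here `{0,1}`, `{1,2}`, `{2,3}`, `{0,3}`, `{0,2}`). -/
noncomputable def spray₂ : Sym2 (Fin 4) → ℝ := fun e =>
  if e = s(0, 1) then 1 else if e = s(1, 2) then 4
    else if e = s(2, 3) then 1 else if e = s(0, 3) then 1
      else if e = s(0, 2) then 1 else 0

/-!
A robot spraying the full capacity `8` on `s(1, 2)` sprays nothing elsewhere, so every edge,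
`s(1, 2)` included (demand `12 > 8`), is also traversed by some other robot. The full robot's
closed walk visits the depot `0` and both ends of `s(1, 2)`, so it has length at least `3`.
The other walks cover all five edges, and every closed walk uses the edges at vertex `2` an
even number of times; so they traverse the three edges at `2` at least four times in total,
and with `s(0, 1)` and `s(0, 3)` have total length at least `6`.
-/

namespace SimpleGraph.Walk

variable {V : Type*} [DecidableEq V] {G : SimpleGraph V}

theorem even_countP_mem_edges_iff {u v : V} (p : G.Walk u v) (x : V) :
    Even (p.edges.countP fun e => x ∈ e) ↔ (u = x ↔ v = x) := by
  induction p with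
  | nil => simp
  | cons huv p ih =>
    have hne := huv.ne
    simp only [edges_cons, List.countP_cons, Sym2.mem_iff, decide_eq_true_eq]
    split_ifs <;> grind

theorem even_countP_mem_edges {u : V} (p : G.Walk u u) (x : V) :
    Even (p.edges.countP fun e => x ∈ e) := by
  simp [even_countP_mem_edges_iff]

theorem card_support_toFinset_le_length_s9 {u : V} (p : G.Walk u u)
    (hp : ¬p.Nil) : p.support.toFinset.card ≤ p.length := by
  have hu : u ∈ p.support.tail := end_mem_tail_support hp
  calc p.support.toFinset.card = p.support.tail.toFinset.card := by
        rw [← p.cons_tail_support, List.toFinset_cons,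
          Finset.insert_eq_of_mem (List.mem_toFinset.2 hu)]
        rfl
    _ ≤ p.support.tail.length := List.toFinset_card_le _
    _ = p.length := by simp [length_support]

theorem three_le_length_of_mem_edges {u a b : V} (p : G.Walk u u) (h : s(a, b) ∈ p.edges)
    (ha : u ≠ a) (hb : u ≠ b) : 3 ≤ p.length := by
  have hab : a ≠ b := (G.mem_edgeSet.1 (p.edges_subset_edgeSet h)).ne
  have hp : ¬p.Nil := fun hp => by simp [hp.eq_nil] at h
  have hsub : {u, a, b} ⊆ p.support.toFinset := by
    simp [Finset.insert_subset_iff, p.fst_mem_support_of_mem_edges h,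
      p.snd_mem_support_of_mem_edges h]
  calc 3 = ({u, a, b} : Finset V).card := by simp [Finset.card_insert_of_notMem, *]
    _ ≤ p.support.toFinset.card := Finset.card_le_card hsub
    _ ≤ p.length := p.card_support_toFinset_le_length_s9 hp

variable [Fintype G.edgeSet]

theorem sum_count_edges_filter {u v : V} (p : G.Walk u v) (q : Sym2 V → Prop)
    [DecidablePred q] : ∑ e ∈ G.edgeFinset with q e, p.edges.count e = p.edges.countP q := by
  rw [← Finset.sum_filter_count_eq_countP]
  refine (Finset.sum_subset (Finset.filter_subset_filter _ fun e he => ?_) fun e _ he => ?_).symm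
  · exact G.mem_edgeFinset.2 (p.edges_subset_edgeSet (List.mem_toFinset.1 he))
  · exact List.count_eq_zero.2 fun h => he (by simp_all)

theorem sum_count_edges {u v : V} (p : G.Walk u v) :
    ∑ e ∈ G.edgeFinset, p.edges.count e = p.length := by
  simpa using p.sum_count_edges_filter fun _ => True

end SimpleGraph.Walk

open SimpleGraph Walk

lemma CG_edgeFinset_eq : CG.edgeFinset = {s(0, 1), s(1, 2), s(2, 3), s(0, 3), s(0, 2)} := by
  decide

lemma six_le_sum_length_of_forall_mem_edges {ι : Type*} {u : Fin 4} (F : Finset ι)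
    (walk : ι → CG.Walk u u) (hcover : ∀ e ∈ CG.edgeSet, ∃ i ∈ F, e ∈ (walk i).edges) :
    6 ≤ ∑ i ∈ F, (walk i).length := by
  set N : Sym2 (Fin 4) → ℕ := fun e => ∑ i ∈ F, (walk i).edges.count e
  have hlen : ∑ i ∈ F, (walk i).length = ∑ e ∈ CG.edgeFinset, N e := by
    simp_rw [N, ← sum_count_edges]
    exact Finset.sum_comm
  have heven : Even (∑ e ∈ CG.edgeFinset with 2 ∈ e, N e) := by
    rw [Finset.sum_comm]
    refine Finset.even_sum _ fun i _ => ?_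
    rw [sum_count_edges_filter]
    exact even_countP_mem_edges (walk i) 2
  have hpos : ∀ e ∈ CG.edgeSet, 1 ≤ N e := fun e he => by
    obtain ⟨i, hi, hei⟩ := hcover e he
    exact (List.count_pos_iff.2 hei).trans_le
      (Finset.single_le_sum (f := fun i => (walk i).edges.count e) (by simp) hi)
  have h2 : CG.edgeFinset.filter (2 ∈ ·) = {s(1, 2), s(2, 3), s(0, 2)} := by decide
  rw [h2, Finset.sum_insert (by decide), Finset.sum_pair (by decide), Nat.even_iff] at heven
  rw [hlen, CG_edgeFinset_eq, Finset.sum_insert (by decide), Finset.sum_insert (by decide),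
    Finset.sum_insert (by decide), Finset.sum_pair (by decide)]
  have := hpos s(0, 1) (by decide)
  have := hpos s(1, 2) (by decide)
  have := hpos s(2, 3) (by decide)
  have := hpos s(0, 3) (by decide)
  have := hpos s(0, 2) (by decide)
  omega

section FullCapacity

variable {R : ℕ} {walk : Fin R → CG.Walk 0 0} {y : Fin R → Sym2 (Fin 4) → ℝ} {r₀ : Fin R}

lemma spray_eq_zero_of_full (hf : Feasible walk y) (h8 : y r₀ s(1, 2) = 8) {e : Sym2 (Fin 4)}
    (he : e ∈ CG.edgeSet) (hne : e ≠ s(1, 2)) : y r₀ e = 0 := by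
  have hsum : y r₀ s(1, 2) + y r₀ e ≤ ∑ e ∈ CG.edgeFinset, y r₀ e :=
    Finset.add_le_sum (fun e _ => hf.1 r₀ e) (by decide) (CG.mem_edgeFinset.2 he) hne.symm
  linarith [hf.2.2.1 r₀, hf.1 r₀ e]

lemma spray_lt_dem_of_full (hf : Feasible walk y) (h8 : y r₀ s(1, 2) = 8) {e : Sym2 (Fin 4)}
    (he : e ∈ CG.edgeSet) : y r₀ e < Dem e := by
  by_cases hne : e = s(1, 2)
  · subst hne
    norm_num [h8, Dem]
  · norm_num [spray_eq_zero_of_full hf h8 he hne, Dem, hne]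

lemma exists_ne_mem_edges_of_full (hf : Feasible walk y) (h8 : y r₀ s(1, 2) = 8)
    {e : Sym2 (Fin 4)} (he : e ∈ CG.edgeSet) : ∃ r ∈ Finset.univ.erase r₀, e ∈ (walk r).edges := by
  have hrest : ∑ r ∈ Finset.univ.erase r₀, (0 : ℝ) < ∑ r ∈ Finset.univ.erase r₀, y r e := by
    have hsplit := Finset.add_sum_erase _ (fun r => y r e) (Finset.mem_univ r₀)
    rw [Finset.sum_const_zero]
    linarith [hf.2.2.2 e he, spray_lt_dem_of_full hf h8 he]
  obtain ⟨r, hr, hpos⟩ := Finset.exists_lt_of_sum_lt hrest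
  exact ⟨r, hr, hf.2.1 r e hpos⟩

lemma nine_le_sum_length_of_full (hf : Feasible walk y) (h8 : y r₀ s(1, 2) = 8) :
    9 ≤ ∑ r, (walk r).length := by
  have h₀ : 3 ≤ (walk r₀).length :=
    (walk r₀).three_le_length_of_mem_edges (a := 1) (b := 2) (hf.2.1 r₀ _ (by norm_num [h8]))
      (by decide) (by decide)
  have hrest : 6 ≤ ∑ r ∈ Finset.univ.erase r₀, (walk r).length :=
    six_le_sum_length_of_forall_mem_edges _ walk fun e he => exists_ne_mem_edges_of_full hf h8 he
  rw [← Finset.add_sum_erase _ _ (Finset.mem_univ r₀)]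
  omega

end FullCapacity

lemma feasible_spray₁_spray₂ : Feasible ![walk₁, walk₂] ![spray₁, spray₂] := by
  have hedges : ∀ e ∈ CG.edgeSet,
      e = s(0, 1) ∨ e = s(1, 2) ∨ e = s(2, 3) ∨ e = s(0, 3) ∨ e = s(0, 2) := by
    decide
  have h₁ : walk₁.edges = [s(0, 1), s(1, 2), s(0, 2)] := by decide
  have h₂ : walk₂.edges = [s(0, 1), s(1, 2), s(2, 3), s(0, 3), s(0, 2), s(0, 2)] := by decide
  refine ⟨fun r e => ?_, fun r e h => ?_, fun r => ?_, fun e he => ?_⟩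
  · fin_cases r <;> simp [spray₁, spray₂] <;> split_ifs <;> norm_num
  · fin_cases r <;> simp [spray₁, spray₂] at h ⊢ <;> split_ifs at h <;> simp_all
  · fin_cases r <;> simp [CG_edgeFinset_eq, spray₁, spray₂, Finset.sum_insert]
    norm_num
  · rcases hedges e he with rfl | rfl | rfl | rfl | rfl <;>
      simp [Fin.sum_univ_two, spray₁, spray₂, Dem]
    norm_num

lemma sum_length_walk₁_walk₂ :
    ∑ r, ((![walk₁, walk₂] : Fin 2 → CG.Walk 0 0) r).length = 9 := by
  simp only [Fin.sum_univ_two]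
  rfl

/-- The exhibited two-robot solution, in which robot 1 sprays the full capacity `8` on
the paper's edge `{2,3}` (here `{1,2}`), is feasible and has cost `3 + 6 = 9`; and `9`
is the least cost among all feasible solutions with some robot spraying exactly `8` on
that edge. -/
theorem counterexample_full_capacity_min_cost_nine :
    Feasible ![walk₁, walk₂] ![spray₁, spray₂] ∧
    (![spray₁, spray₂] : Fin 2 → Sym2 (Fin 4) → ℝ) 0 s(1, 2) = 8 ∧
    (∑ r, ((![walk₁, walk₂] : Fin 2 → CG.Walk 0 0) r).length) = 9 ∧
    IsLeast {c : ℕ | ∃ (R : ℕ) (walk : Fin R → CG.Walk 0 0)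
        (y : Fin R → Sym2 (Fin 4) → ℝ),
      Feasible walk y ∧ (∃ r, y r s(1, 2) = 8) ∧ ∑ r, (walk r).length = c} 9 := by
  have hfull : (![spray₁, spray₂] : Fin 2 → Sym2 (Fin 4) → ℝ) 0 s(1, 2) = 8 := by simp [spray₁]
  refine ⟨feasible_spray₁_spray₂, hfull, sum_length_walk₁_walk₂,
    ⟨2, _, _, feasible_spray₁_spray₂, ⟨0, hfull⟩, sum_length_walk₁_walk₂⟩, ?_⟩
  rintro c ⟨R, walk, y, hf, ⟨r, h8⟩, rfl⟩
  exact nine_le_sum_length_of_full hf h8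
end

section
/- For every finite family of closed walks in the counterexample graph G, each starting and ending at vertex 1, whose traversed edges collectively include all five edges {1,2}, {2,3}, {3,4}, {1,4}, {1,3}, the sum of the lengths of the walks is at least 6. -/
open Finset

namespace SimpleGraph.Walk

variable {V : Type*} [DecidableEq V] {G : SimpleGraph V}

theorem even_countP_edges_iff {u v : V} (p : G.Walk u v) (x : V) :
    Even (p.edges.countP (fun e => x ∈ e)) ↔ (x = u ↔ x = v) := by
  induction p with
  | nil => simp
  | @cons u w v huw q ih =>
    simp only [edges_cons, List.countP_cons, Sym2.mem_iff]
    by_cases hxu : x = u <;> by_cases hxw : x = w <;> simp_all [Nat.even_add_one]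

theorem even_countP_edges_of_closed {u : V} (p : G.Walk u u) (x : V) :
    Even (p.edges.countP (fun e => x ∈ e)) :=
  (p.even_countP_edges_iff x).2 Iff.rfl

end SimpleGraph.Walk

theorem card_le_sum_countP {ι α : Type*} [Fintype ι] [DecidableEq α] (l : ι → List α)
    (p : α → Prop) [DecidablePred p] {t : Finset α} (ht : ∀ a ∈ t, p a ∧ ∃ i, a ∈ l i) :
    #t ≤ ∑ i, (l i).countP p := by
  set m : Multiset α := ∑ i, (l i : Multiset α)
  have hsub : t ⊆ (m.filter p).toFinset := fun a ha => by
    obtain ⟨hpa, i, hai⟩ := ht a ha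
    simpa [m, Multiset.mem_sum] using ⟨⟨i, hai⟩, hpa⟩
  calc #t ≤ #(m.filter p).toFinset := card_le_card hsub
    _ ≤ Multiset.card (m.filter p) := Multiset.toFinset_card_le _
    _ = Multiset.countP p m := (Multiset.countP_eq_card_filter _ _).symm
    _ = ∑ i, (l i).countP p := by
      simp only [m, ← Multiset.coe_countPAddMonoidHom, map_sum]
      rfl

/-- Every finite family of closed walks at the depot (vertex `0`, the paper's vertex
`1`) that collectively traverses all five edges `{1,2}`, `{2,3}`, `{3,4}`, `{1,4}`,
`{1,3}` of the paper (here `{0,1}`, `{1,2}`, `{2,3}`, `{0,3}`, `{0,2}`) has total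
length at least `6`. -/
theorem counterexample_cover_all_edges_total_length_ge_six
    (R : ℕ) (walk : Fin R → CG.Walk 0 0)
    (h01 : ∃ r, s(0, 1) ∈ (walk r).edges)
    (h12 : ∃ r, s(1, 2) ∈ (walk r).edges)
    (h23 : ∃ r, s(2, 3) ∈ (walk r).edges)
    (h03 : ∃ r, s(0, 3) ∈ (walk r).edges)
    (h02 : ∃ r, s(0, 2) ∈ (walk r).edges) :
    6 ≤ ∑ r, (walk r).length := by
  have hlen : ∀ r, (walk r).length =
      (walk r).edges.countP (fun e => 2 ∈ e) + (walk r).edges.countP (fun e => 2 ∉ e) := by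
    intro r
    rw [← (walk r).length_edges, List.length_eq_countP_add_countP (fun e => 2 ∈ e)]
    simp
  have heven : Even (∑ r, (walk r).edges.countP (fun e => 2 ∈ e)) :=
    Finset.even_sum _ fun r _ => (walk r).even_countP_edges_of_closed 2
  have hat2 : 3 ≤ ∑ r, (walk r).edges.countP (fun e => 2 ∈ e) :=
    le_trans (by decide) <| card_le_sum_countP _ _ (t := {s(1, 2), s(2, 3), s(0, 2)})
      (by simp only [mem_insert, mem_singleton]
          rintro a (rfl | rfl | rfl)
          exacts [⟨by decide, h12⟩, ⟨by decide, h23⟩, ⟨by decide, h02⟩])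
  have hoff2 : 2 ≤ ∑ r, (walk r).edges.countP (fun e => 2 ∉ e) :=
    le_trans (by decide) <| card_le_sum_countP _ _ (t := {s(0, 1), s(0, 3)})
      (by simp only [mem_insert, mem_singleton]
          rintro a (rfl | rfl)
          exacts [⟨by decide, h01⟩, ⟨by decide, h03⟩])
  rw [Finset.sum_congr rfl fun r _ => hlen r, Finset.sum_add_distrib]
  obtain ⟨k, hk⟩ := heven
  omega
end
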